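/- arXiv:2306.06002 — 3 statements merged into one kernel-verified Lean document; each statement's English description precedes it below -/
import Mathlib

section
/- (Optimal scalar weight) Suppose Tr(Σ_I) + Tr(Σ_O) + ‖Δ‖₂² > 0. Among all scalar-weighted estimators α̂_{wI_p} = w α̂_I + (1−w) α̂_O with w ∈ ℝ, the mean squared error MSE(α̂_{wI_p}) = E‖α̂_{wI_p} − α‖₂² is uniquely minimized at w* = (Tr(Σ_O) + ‖Δ‖₂²) / (Tr(Σ_I) + Tr(Σ_O) + ‖Δ‖₂²). -/
open MeasureTheory ProbabilityTheory Matrix Finset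

/-- **Optimal scalar weight.** Among all scalar-weighted estimators
`α̂_{wI} = w α̂_I + (1−w) α̂_O`, the MSE `E‖α̂_{wI} − α‖₂²` is uniquely minimized at
`w* = (Tr Σ_O + ‖Δ‖₂²) / (Tr Σ_I + Tr Σ_O + ‖Δ‖₂²)`, provided the denominator is
positive. -/
theorem stmt_7 {Ω : Type*} [MeasurableSpace Ω] (μ : Measure Ω) [IsProbabilityMeasure μ]
    {p : ℕ} (α Δ : Fin p → ℝ) (SI SO : Matrix (Fin p) (Fin p) ℝ)
    (hSIpsd : SI.PosSemidef) (hSOpsd : SO.PosSemidef)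
    (αI αO : Ω → Fin p → ℝ) (hmI : Measurable αI) (hmO : Measurable αO)
    (hindep : IndepFun αI αO μ)
    (hL2I : ∀ i j, Integrable (fun ω => αI ω i * αI ω j) μ)
    (hL2O : ∀ i j, Integrable (fun ω => αO ω i * αO ω j) μ)
    (hL1I : ∀ i, Integrable (fun ω => αI ω i) μ)
    (hL1O : ∀ i, Integrable (fun ω => αO ω i) μ)
    (hmeanI : ∀ i, ∫ ω, αI ω i ∂μ = α i)
    (hmeanO : ∀ i, ∫ ω, αO ω i ∂μ = α i + Δ i)
    (hcovI : ∀ i j, ∫ ω, (αI ω i - α i) * (αI ω j - α j) ∂μ = SI i j)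
    (hcovO : ∀ i j, ∫ ω, (αO ω i - (α i + Δ i)) * (αO ω j - (α j + Δ j)) ∂μ = SO i j)
    (hpos : 0 < SI.trace + SO.trace + ∑ k, Δ k ^ 2)
    (wstar : ℝ)
    (hwstar : wstar = (SO.trace + ∑ k, Δ k ^ 2) /
        (SI.trace + SO.trace + ∑ k, Δ k ^ 2)) :
    ∀ w : ℝ, w ≠ wstar →
      (∫ ω, ∑ k, (wstar * αI ω k + (1 - wstar) * αO ω k - α k) ^ 2 ∂μ) <
        ∫ ω, ∑ k, (w * αI ω k + (1 - w) * αO ω k - α k) ^ 2 ∂μ := by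
  -- per-coordinate integrability and integral values
  have ia : ∀ k, Integrable (fun ω => αI ω k - α k) μ := fun k =>
    (hL1I k).sub (integrable_const _)
  have ib : ∀ k, Integrable (fun ω => αO ω k - (α k + Δ k)) μ := fun k =>
    (hL1O k).sub (integrable_const _)
  have ia2 : ∀ k, Integrable (fun ω => (αI ω k - α k) * (αI ω k - α k)) μ := by
    intro k
    have : (fun ω => (αI ω k - α k) * (αI ω k - α k))
        = fun ω => αI ω k * αI ω k - (2 * α k) * αI ω k + α k * α k := by
      funext ω; ring
    rw [this]
    exact ((hL2I k k).sub ((hL1I k).const_mul _)).add (integrable_const _)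
  have ib2 : ∀ k, Integrable (fun ω => (αO ω k - (α k + Δ k)) * (αO ω k - (α k + Δ k))) μ := by
    intro k
    have : (fun ω => (αO ω k - (α k + Δ k)) * (αO ω k - (α k + Δ k)))
        = fun ω => αO ω k * αO ω k - (2 * (α k + Δ k)) * αO ω k + (α k + Δ k) * (α k + Δ k) := by
      funext ω; ring
    rw [this]
    exact ((hL2O k k).sub ((hL1O k).const_mul _)).add (integrable_const _)
  have hindk : ∀ k, IndepFun (fun ω => αI ω k - α k) (fun ω => αO ω k - (α k + Δ k)) μ := by
    intro k
    exact hindep.comp ((measurable_pi_apply k).sub measurable_const)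
      ((measurable_pi_apply k).sub measurable_const)
  have iab : ∀ k, Integrable (fun ω => (αI ω k - α k) * (αO ω k - (α k + Δ k))) μ := by
    intro k
    exact (hindk k).integrable_mul (ia k) (ib k)
  have hma : ∀ k, ∫ ω, (αI ω k - α k) ∂μ = 0 := by
    intro k
    rw [integral_sub (hL1I k) (integrable_const _), hmeanI k, integral_const]
    simp
  have hmb : ∀ k, ∫ ω, (αO ω k - (α k + Δ k)) ∂μ = 0 := by
    intro k
    rw [integral_sub (hL1O k) (integrable_const _), hmeanO k, integral_const]
    simp
  have hab : ∀ k, ∫ ω, (αI ω k - α k) * (αO ω k - (α k + Δ k)) ∂μ = 0 := by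
    intro k
    have := (hindk k).integral_mul_eq_mul_integral (ia k).aestronglyMeasurable (ib k).aestronglyMeasurable
    simpa [Pi.mul_def, hma k, hmb k] using this
  -- expansion of each summand
  have expand : ∀ (w : ℝ) (k : Fin p) (ω : Ω),
      (w * αI ω k + (1 - w) * αO ω k - α k) ^ 2
        = w ^ 2 * ((αI ω k - α k) * (αI ω k - α k))
          + (1 - w) ^ 2 * ((αO ω k - (α k + Δ k)) * (αO ω k - (α k + Δ k)))
          + (2 * w * (1 - w)) * ((αI ω k - α k) * (αO ω k - (α k + Δ k)))
          + (2 * w * (1 - w) * Δ k) * (αI ω k - α k)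
          + (2 * (1 - w) ^ 2 * Δ k) * (αO ω k - (α k + Δ k))
          + (1 - w) ^ 2 * Δ k ^ 2 := by
    intro w k ω; ring
  have isummand : ∀ (w : ℝ) (k : Fin p),
      Integrable (fun ω => (w * αI ω k + (1 - w) * αO ω k - α k) ^ 2) μ := by
    intro w k
    have : (fun ω => (w * αI ω k + (1 - w) * αO ω k - α k) ^ 2)
        = fun ω => w ^ 2 * ((αI ω k - α k) * (αI ω k - α k))
          + (1 - w) ^ 2 * ((αO ω k - (α k + Δ k)) * (αO ω k - (α k + Δ k)))
          + (2 * w * (1 - w)) * ((αI ω k - α k) * (αO ω k - (α k + Δ k)))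
          + (2 * w * (1 - w) * Δ k) * (αI ω k - α k)
          + (2 * (1 - w) ^ 2 * Δ k) * (αO ω k - (α k + Δ k))
          + (1 - w) ^ 2 * Δ k ^ 2 := by
      funext ω; exact expand w k ω
    rw [this]
    exact (((((((ia2 k).const_mul _).add ((ib2 k).const_mul _)).add
      ((iab k).const_mul _)).add ((ia k).const_mul _)).add
      ((ib k).const_mul _)).add (integrable_const _))
  have perk : ∀ (w : ℝ) (k : Fin p),
      ∫ ω, (w * αI ω k + (1 - w) * αO ω k - α k) ^ 2 ∂μ
        = w ^ 2 * SI k k + (1 - w) ^ 2 * (SO k k + Δ k ^ 2) := by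
    intro w k
    calc ∫ ω, (w * αI ω k + (1 - w) * αO ω k - α k) ^ 2 ∂μ
        = ∫ ω, (w ^ 2 * ((αI ω k - α k) * (αI ω k - α k))
          + (1 - w) ^ 2 * ((αO ω k - (α k + Δ k)) * (αO ω k - (α k + Δ k)))
          + (2 * w * (1 - w)) * ((αI ω k - α k) * (αO ω k - (α k + Δ k)))
          + (2 * w * (1 - w) * Δ k) * (αI ω k - α k)
          + (2 * (1 - w) ^ 2 * Δ k) * (αO ω k - (α k + Δ k))
          + (1 - w) ^ 2 * Δ k ^ 2) ∂μ := by
            apply integral_congr_ae; filter_upwards with ω; exact expand w k ω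
      _ = w ^ 2 * SI k k + (1 - w) ^ 2 * (SO k k + Δ k ^ 2) := by
            have t1 : Integrable (fun ω => w ^ 2 * ((αI ω k - α k) * (αI ω k - α k))) μ :=
              (ia2 k).const_mul _
            have t2 : Integrable (fun ω => (1 - w) ^ 2 *
                ((αO ω k - (α k + Δ k)) * (αO ω k - (α k + Δ k)))) μ := (ib2 k).const_mul _
            have t3 : Integrable (fun ω => (2 * w * (1 - w)) *
                ((αI ω k - α k) * (αO ω k - (α k + Δ k)))) μ := (iab k).const_mul _
            have t4 : Integrable (fun ω => (2 * w * (1 - w) * Δ k) * (αI ω k - α k)) μ :=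
              (ia k).const_mul _
            have t5 : Integrable (fun ω => (2 * (1 - w) ^ 2 * Δ k) *
                (αO ω k - (α k + Δ k))) μ := (ib k).const_mul _
            have s2 : Integrable (fun ω => w ^ 2 * ((αI ω k - α k) * (αI ω k - α k))
                + (1 - w) ^ 2 * ((αO ω k - (α k + Δ k)) * (αO ω k - (α k + Δ k)))) μ := t1.add t2
            have s3 : Integrable (fun ω => w ^ 2 * ((αI ω k - α k) * (αI ω k - α k))
                + (1 - w) ^ 2 * ((αO ω k - (α k + Δ k)) * (αO ω k - (α k + Δ k)))
                + (2 * w * (1 - w)) * ((αI ω k - α k) * (αO ω k - (α k + Δ k)))) μ := s2.add t3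
            have s4 : Integrable (fun ω => w ^ 2 * ((αI ω k - α k) * (αI ω k - α k))
                + (1 - w) ^ 2 * ((αO ω k - (α k + Δ k)) * (αO ω k - (α k + Δ k)))
                + (2 * w * (1 - w)) * ((αI ω k - α k) * (αO ω k - (α k + Δ k)))
                + (2 * w * (1 - w) * Δ k) * (αI ω k - α k)) μ := s3.add t4
            have s5 : Integrable (fun ω => w ^ 2 * ((αI ω k - α k) * (αI ω k - α k))
                + (1 - w) ^ 2 * ((αO ω k - (α k + Δ k)) * (αO ω k - (α k + Δ k)))
                + (2 * w * (1 - w)) * ((αI ω k - α k) * (αO ω k - (α k + Δ k)))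
                + (2 * w * (1 - w) * Δ k) * (αI ω k - α k)
                + (2 * (1 - w) ^ 2 * Δ k) * (αO ω k - (α k + Δ k))) μ := s4.add t5
            rw [integral_add s5 (integrable_const _), integral_add s4 t5,
              integral_add s3 t4, integral_add s2 t3, integral_add t1 t2,
              integral_const_mul, integral_const_mul, integral_const_mul,
              integral_const_mul, integral_const_mul, integral_const,
              hcovI k k, hcovO k k, hab k, hma k, hmb k]
            simp; ring
  -- total MSE formula
  have mse : ∀ w : ℝ,
      (∫ ω, ∑ k, (w * αI ω k + (1 - w) * αO ω k - α k) ^ 2 ∂μ)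
        = w ^ 2 * SI.trace + (1 - w) ^ 2 * (SO.trace + ∑ k, Δ k ^ 2) := by
    intro w
    rw [integral_finset_sum _ fun k _ => isummand w k]
    simp only [perk w]
    simp [Matrix.trace, Matrix.diag, Finset.sum_add_distrib, Finset.mul_sum, mul_add]
  intro w hw
  rw [mse w, mse wstar]
  have h1 : wstar * (SI.trace + SO.trace + ∑ k, Δ k ^ 2) = SO.trace + ∑ k, Δ k ^ 2 := by
    rw [hwstar]; field_simp
  have hsq : 0 < (w - wstar) ^ 2 := by
    have : w - wstar ≠ 0 := sub_ne_zero.mpr hw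
    positivity
  have key : w ^ 2 * SI.trace + (1 - w) ^ 2 * (SO.trace + ∑ k, Δ k ^ 2)
      - (wstar ^ 2 * SI.trace + (1 - wstar) ^ 2 * (SO.trace + ∑ k, Δ k ^ 2))
      = (SI.trace + SO.trace + ∑ k, Δ k ^ 2) * (w - wstar) ^ 2 := by
    linear_combination (2 * (w - wstar)) * h1
  nlinarith [mul_pos hpos hsq, key]
end

section
/- (Optimal diagonal weight) Suppose for each k = 1,…,p that Σ_I^{(k,k)} + Σ_O^{(k,k)} + (Δ^{(k)})² > 0. Among all diagonal-weighted estimators α̂_{diag(w)} with w ∈ ℝ^p, the mean squared error MSE(α̂_{diag(w)}) = E‖α̂_{diag(w)} − α‖₂² is uniquely minimized at the weight vector w* with components w*^{(k)} = (Σ_O^{(k,k)} + (Δ^{(k)})²) / (Σ_I^{(k,k)} + Σ_O^{(k,k)} + (Δ^{(k)})²) for k = 1,…,p. -/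
open MeasureTheory ProbabilityTheory Matrix Finset

private lemma stmt8_intsq {Ω : Type*} [MeasurableSpace Ω] (μ : Measure Ω) [IsProbabilityMeasure μ]
    (X Y : Ω → ℝ) (hX2 : Integrable (fun ω => X ω * X ω) μ)
    (hY2 : Integrable (fun ω => Y ω * Y ω) μ)
    (hX1 : Integrable X μ) (hY1 : Integrable Y μ)
    (hind : IndepFun X Y μ) (w a : ℝ) :
    Integrable (fun ω => (w * X ω + (1 - w) * Y ω - a) ^ 2) μ := by
  have hXY : Integrable (fun ω => X ω * Y ω) μ := hind.integrable_mul hX1 hY1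
  have heq : (fun ω => (w * X ω + (1 - w) * Y ω - a) ^ 2) =
      fun ω => w ^ 2 * (X ω * X ω) + (1 - w) ^ 2 * (Y ω * Y ω) + 2 * w * (1 - w) * (X ω * Y ω)
      + (-2 * w * a) * X ω + (-2 * (1 - w) * a) * Y ω + a ^ 2 := by
    funext ω; ring
  rw [heq]
  exact (((((hX2.const_mul _).add (hY2.const_mul _)).add (hXY.const_mul _)).add
    (hX1.const_mul _)).add (hY1.const_mul _)).add (integrable_const _)

private lemma stmt8_percoord {Ω : Type*} [MeasurableSpace Ω] (μ : Measure Ω) [IsProbabilityMeasure μ]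
    (X Y : Ω → ℝ) (hX2 : Integrable (fun ω => X ω * X ω) μ)
    (hY2 : Integrable (fun ω => Y ω * Y ω) μ)
    (hX1 : Integrable X μ) (hY1 : Integrable Y μ)
    (hind : IndepFun X Y μ) (w a : ℝ) :
    ∫ ω, (w * X ω + (1 - w) * Y ω - a) ^ 2 ∂μ =
      w ^ 2 * (∫ ω, X ω * X ω ∂μ) + (1 - w) ^ 2 * (∫ ω, Y ω * Y ω ∂μ)
      + 2 * w * (1 - w) * ((∫ ω, X ω ∂μ) * (∫ ω, Y ω ∂μ))
      - 2 * w * a * (∫ ω, X ω ∂μ) - 2 * (1 - w) * a * (∫ ω, Y ω ∂μ) + a ^ 2 := by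
  have hXY : Integrable (fun ω => X ω * Y ω) μ := hind.integrable_mul hX1 hY1
  have hmul : ∫ ω, X ω * Y ω ∂μ = (∫ ω, X ω ∂μ) * (∫ ω, Y ω ∂μ) :=
    hind.integral_fun_mul_eq_mul_integral hX1.aestronglyMeasurable hY1.aestronglyMeasurable
  have heq : ∀ ω, (w * X ω + (1 - w) * Y ω - a) ^ 2 =
      w ^ 2 * (X ω * X ω) + (1 - w) ^ 2 * (Y ω * Y ω) + 2 * w * (1 - w) * (X ω * Y ω)
      + (-2 * w * a) * X ω + (-2 * (1 - w) * a) * Y ω + a ^ 2 := fun ω => by ring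
  simp_rw [heq]
  rw [integral_add, integral_add, integral_add, integral_add, integral_add,
    integral_const_mul, integral_const_mul, integral_const_mul, integral_const_mul,
    integral_const_mul, integral_const, hmul]
  · simp; ring
  all_goals
    repeat
      first
      | exact (hX2.const_mul _)
      | exact (hY2.const_mul _)
      | exact (hXY.const_mul _)
      | exact (hX1.const_mul _)
      | exact (hY1.const_mul _)
      | exact integrable_const _
      | apply Integrable.add

private lemma stmt8_second_moment {Ω : Type*} [MeasurableSpace Ω] (μ : Measure Ω)
    [IsProbabilityMeasure μ] (X : Ω → ℝ) (hX2 : Integrable (fun ω => X ω * X ω) μ)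
    (hX1 : Integrable X μ) (a : ℝ) :
    ∫ ω, (X ω - a) * (X ω - a) ∂μ =
      (∫ ω, X ω * X ω ∂μ) - 2 * a * (∫ ω, X ω ∂μ) + a ^ 2 := by
  have heq : ∀ ω, (X ω - a) * (X ω - a) =
      X ω * X ω + (-2 * a) * X ω + a ^ 2 := fun ω => by ring
  simp_rw [heq]
  rw [integral_add, integral_add, integral_const_mul, integral_const]
  · simp; ring
  all_goals
    repeat
      first
      | exact hX2
      | exact (hX1.const_mul _)
      | exact integrable_const _
      | apply Integrable.add

/-- **Optimal diagonal weight matrix.** Among all diagonally weighted estimators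
`α̂_{diag(w)} = diag(w) α̂_I + (I − diag(w)) α̂_O`, the MSE is uniquely minimized at
`w*^{(k)} = (Σ_O^{(k,k)} + (Δ^{(k)})²) / (Σ_I^{(k,k)} + Σ_O^{(k,k)} + (Δ^{(k)})²)`,
provided each denominator is positive. -/
theorem stmt_8 {Ω : Type*} [MeasurableSpace Ω] (μ : Measure Ω) [IsProbabilityMeasure μ]
    {p : ℕ} (α Δ : Fin p → ℝ) (SI SO : Matrix (Fin p) (Fin p) ℝ)
    (hSIpsd : SI.PosSemidef) (hSOpsd : SO.PosSemidef)
    (αI αO : Ω → Fin p → ℝ) (hmI : Measurable αI) (hmO : Measurable αO)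
    (hindep : IndepFun αI αO μ)
    (hL2I : ∀ i j, Integrable (fun ω => αI ω i * αI ω j) μ)
    (hL2O : ∀ i j, Integrable (fun ω => αO ω i * αO ω j) μ)
    (hL1I : ∀ i, Integrable (fun ω => αI ω i) μ)
    (hL1O : ∀ i, Integrable (fun ω => αO ω i) μ)
    (hmeanI : ∀ i, ∫ ω, αI ω i ∂μ = α i)
    (hmeanO : ∀ i, ∫ ω, αO ω i ∂μ = α i + Δ i)
    (hcovI : ∀ i j, ∫ ω, (αI ω i - α i) * (αI ω j - α j) ∂μ = SI i j)
    (hcovO : ∀ i j, ∫ ω, (αO ω i - (α i + Δ i)) * (αO ω j - (α j + Δ j)) ∂μ = SO i j)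
    (hpos : ∀ k, 0 < SI k k + SO k k + Δ k ^ 2)
    (wstar : Fin p → ℝ)
    (hwstar : ∀ k, wstar k = (SO k k + Δ k ^ 2) / (SI k k + SO k k + Δ k ^ 2)) :
    ∀ w : Fin p → ℝ, w ≠ wstar →
      (∫ ω, ∑ k, (wstar k * αI ω k + (1 - wstar k) * αO ω k - α k) ^ 2 ∂μ) <
        ∫ ω, ∑ k, (w k * αI ω k + (1 - w k) * αO ω k - α k) ^ 2 ∂μ := by
  intro w hw
  have hindk : ∀ k : Fin p, IndepFun (fun ω => αI ω k) (fun ω => αO ω k) μ :=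
    fun k => hindep.comp (measurable_pi_apply k) (measurable_pi_apply k)
  -- second moments
  have hEX2 : ∀ k, ∫ ω, αI ω k * αI ω k ∂μ = SI k k + α k ^ 2 := by
    intro k
    have := stmt8_second_moment μ (fun ω => αI ω k) (hL2I k k) (hL1I k) (α k)
    rw [hcovI k k, hmeanI k] at this
    linarith
  have hEY2 : ∀ k, ∫ ω, αO ω k * αO ω k ∂μ = SO k k + (α k + Δ k) ^ 2 := by
    intro k
    have := stmt8_second_moment μ (fun ω => αO ω k) (hL2O k k) (hL1O k) (α k + Δ k)
    rw [hcovO k k, hmeanO k] at this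
    linarith
  -- per-coordinate MSE
  have hmse : ∀ (v : Fin p → ℝ) (k : Fin p),
      ∫ ω, (v k * αI ω k + (1 - v k) * αO ω k - α k) ^ 2 ∂μ =
        (v k) ^ 2 * SI k k + (1 - v k) ^ 2 * (SO k k + Δ k ^ 2) := by
    intro v k
    rw [stmt8_percoord μ (fun ω => αI ω k) (fun ω => αO ω k) (hL2I k k) (hL2O k k)
      (hL1I k) (hL1O k) (hindk k) (v k) (α k), hEX2 k, hEY2 k, hmeanI k, hmeanO k]
    ring
  have hsum : ∀ (v : Fin p → ℝ),
      ∫ ω, ∑ k, (v k * αI ω k + (1 - v k) * αO ω k - α k) ^ 2 ∂μ =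
        ∑ k, ((v k) ^ 2 * SI k k + (1 - v k) ^ 2 * (SO k k + Δ k ^ 2)) := by
    intro v
    rw [integral_finset_sum]
    · exact Finset.sum_congr rfl fun k _ => hmse v k
    · exact fun k _ => stmt8_intsq μ (fun ω => αI ω k) (fun ω => αO ω k) (hL2I k k)
        (hL2O k k) (hL1I k) (hL1O k) (hindk k) (v k) (α k)
  rw [hsum wstar, hsum w]
  -- algebraic minimization
  have key : ∀ (t : ℝ) (k : Fin p),
      (t ^ 2 * SI k k + (1 - t) ^ 2 * (SO k k + Δ k ^ 2)) -
      ((wstar k) ^ 2 * SI k k + (1 - wstar k) ^ 2 * (SO k k + Δ k ^ 2)) =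
        (SI k k + SO k k + Δ k ^ 2) * (t - wstar k) ^ 2 := by
    intro t k
    have h0 : SI k k + SO k k + Δ k ^ 2 ≠ 0 := ne_of_gt (hpos k)
    rw [hwstar k]
    field_simp
    ring
  obtain ⟨k0, hk0⟩ : ∃ k, w k ≠ wstar k := Function.ne_iff.mp hw
  refine Finset.sum_lt_sum (fun k _ => ?_) ⟨k0, Finset.mem_univ k0, ?_⟩
  · nlinarith [key (w k) k, mul_nonneg (le_of_lt (hpos k)) (sq_nonneg (w k - wstar k))]
  · have hkey := key (w k0) k0
    have hne : w k0 - wstar k0 ≠ 0 := sub_ne_zero.mpr hk0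
    have h2 : 0 < (w k0 - wstar k0) ^ 2 := by positivity
    linarith [mul_pos (hpos k0) h2]
end

section
/- (Optimal weight matrix) Suppose Σ_I + Σ_O + ΔΔ^⊤ is positive definite. Then the matrix W* = (Σ_O + ΔΔ^⊤)(Σ_I + Σ_O + ΔΔ^⊤)^{-1} minimizes the mean squared error over all weight matrices: MSE(α̂_{W*}) ≤ MSE(α̂_W) for every W ∈ ℝ^{p×p}. -/
open MeasureTheory ProbabilityTheory Matrix Finset

private lemma integral_sq_sum {Ω : Type*} [MeasurableSpace Ω] (μ : Measure Ω) {n : ℕ}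
    (f : Fin n → Ω → ℝ) (hf : ∀ i j, Integrable (fun ω => f i ω * f j ω) μ) :
    ∫ ω, (∑ i, f i ω) ^ 2 ∂μ = ∑ i, ∑ j, ∫ ω, f i ω * f j ω ∂μ := by
  have h : ∀ ω, (∑ i, f i ω) ^ 2 = ∑ i, ∑ j, f i ω * f j ω := fun ω => by
    rw [pow_two, Finset.sum_mul_sum]
  simp_rw [h]
  rw [integral_finset_sum _ fun i _ => integrable_finset_sum _ fun j _ => hf i j]
  exact Finset.sum_congr rfl fun i _ => integral_finset_sum _ fun j _ => hf i j

private lemma trace_conj_nonneg {n : ℕ} {A : Matrix (Fin n) (Fin n) ℝ} (hA : A.PosSemidef)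
    (M : Matrix (Fin n) (Fin n) ℝ) : 0 ≤ (M * A * Mᵀ).trace := by
  have h := hA.mul_mul_conjTranspose_same M
  rw [conjTranspose_eq_transpose_of_trivial] at h
  rw [Matrix.trace]
  refine Finset.sum_nonneg fun k _ => ?_
  simpa using h.diag_nonneg (i := k)

private lemma mse_formula {Ω : Type*} [MeasurableSpace Ω] (μ : Measure Ω) {p : ℕ}
    (F G : Fin p → Ω → ℝ) (SI B : Matrix (Fin p) (Fin p) ℝ)
    (hintFF : ∀ i j, Integrable (fun ω => F i ω * F j ω) μ)
    (hintGG : ∀ i j, Integrable (fun ω => G i ω * G j ω) μ)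
    (hintFG : ∀ i j, Integrable (fun ω => F i ω * G j ω) μ)
    (hFF : ∀ i j, ∫ ω, F i ω * F j ω ∂μ = SI i j)
    (hGG : ∀ i j, ∫ ω, G i ω * G j ω ∂μ = B i j)
    (hFG : ∀ i j, ∫ ω, F i ω * G j ω ∂μ = 0)
    (W M : Matrix (Fin p) (Fin p) ℝ) :
    ∫ ω, ∑ k, (∑ i, (W k i * F i ω + M k i * G i ω)) ^ 2 ∂μ
      = (W * SI * Wᵀ + M * B * Mᵀ).trace := by
  have hexp : ∀ k i j, (fun ω => (W k i * F i ω + M k i * G i ω) *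
      (W k j * F j ω + M k j * G j ω))
      = fun ω => (W k i * W k j) * (F i ω * F j ω) + (W k i * M k j) * (F i ω * G j ω)
          + (M k i * W k j) * (F j ω * G i ω) + (M k i * M k j) * (G i ω * G j ω) := by
    intro k i j; funext ω; ring
  have hint : ∀ k i j, Integrable (fun ω => (W k i * F i ω + M k i * G i ω) *
      (W k j * F j ω + M k j * G j ω)) μ := by
    intro k i j
    rw [hexp k i j]
    exact ((((hintFF i j).const_mul _).add ((hintFG i j).const_mul _)).add
      ((hintFG j i).const_mul _)).add ((hintGG i j).const_mul _)
  have hval : ∀ k i j, ∫ ω, (W k i * F i ω + M k i * G i ω) *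
      (W k j * F j ω + M k j * G j ω) ∂μ
      = W k i * W k j * SI i j + M k i * M k j * B i j := by
    intro k i j
    rw [hexp k i j]
    rw [integral_add, integral_add, integral_add, integral_const_mul, integral_const_mul,
      integral_const_mul, integral_const_mul, hFF, hGG, hFG i j, hFG j i]
    · ring
    · exact ((hintFF i j).const_mul _)
    · exact ((hintFG i j).const_mul _)
    · exact (((hintFF i j).const_mul _).add ((hintFG i j).const_mul _))
    · exact ((hintFG j i).const_mul _)
    · exact ((((hintFF i j).const_mul _).add ((hintFG i j).const_mul _)).add
        ((hintFG j i).const_mul _))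
    · exact ((hintGG i j).const_mul _)
  rw [integral_finset_sum _ (fun k _ => ?_)]
  · calc ∑ k, ∫ ω, (∑ i, (W k i * F i ω + M k i * G i ω)) ^ 2 ∂μ
        = ∑ k, ∑ i, ∑ j, (W k i * W k j * SI i j + M k i * M k j * B i j) := by
          refine Finset.sum_congr rfl fun k _ => ?_
          rw [integral_sq_sum μ _ (fun i j => hint k i j)]
          exact Finset.sum_congr rfl fun i _ => Finset.sum_congr rfl fun j _ => hval k i j
      _ = (W * SI * Wᵀ + M * B * Mᵀ).trace := by
          simp only [Matrix.trace, Matrix.diag, Matrix.add_apply, Matrix.mul_apply,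
            Matrix.transpose_apply, Finset.sum_mul, Finset.mul_sum, Finset.sum_add_distrib]
          congr 1 <;> refine Finset.sum_congr rfl fun k _ => ?_
          · rw [Finset.sum_comm]
            exact Finset.sum_congr rfl fun i _ => Finset.sum_congr rfl fun j _ => by ring
          · rw [Finset.sum_comm]
            exact Finset.sum_congr rfl fun i _ => Finset.sum_congr rfl fun j _ => by ring
  · have h : ∀ ω, (∑ i, (W k i * F i ω + M k i * G i ω)) ^ 2
        = ∑ i, ∑ j, (W k i * F i ω + M k i * G i ω) * (W k j * F j ω + M k j * G j ω) :=
      fun ω => by rw [pow_two, Finset.sum_mul_sum]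
    simp_rw [h]
    exact integrable_finset_sum _ fun i _ => integrable_finset_sum _ fun j _ => hint k i j

private lemma mse_alg {p : ℕ} (SI B A W Wstar : Matrix (Fin p) (Fin p) ℝ)
    (hA : A = SI + B)
    (h1 : Wstar * A = B) (h2 : A * Wstarᵀ = B) :
    W * SI * Wᵀ + (1 - W) * B * (1 - W)ᵀ
      = (W - Wstar) * A * (W - Wstar)ᵀ + (B - Wstar * B) := by
  have hSI : SI = A - B := by rw [hA]; abel
  rw [hSI]
  have lhs : W * (A - B) * Wᵀ + (1 - W) * B * (1 - W)ᵀ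
      = W * A * Wᵀ - W * B - B * Wᵀ + B := by
    simp only [Matrix.sub_mul, Matrix.mul_sub, Matrix.transpose_sub, Matrix.transpose_one,
      Matrix.mul_one, Matrix.one_mul]
    abel
  rw [lhs]
  have rhs : (W - Wstar) * A * (W - Wstar)ᵀ
      = W * A * Wᵀ - W * B - B * Wᵀ + Wstar * B := by
    simp only [Matrix.sub_mul, Matrix.mul_sub, Matrix.transpose_sub]
    rw [mul_assoc W A Wstarᵀ, mul_assoc Wstar A Wstarᵀ, h2, h1]
    abel
  rw [rhs]
  abel

/-- **Optimal weight matrix.** If `Σ_I + Σ_O + ΔΔ^⊤` is positive definite, the matrix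
`W* = (Σ_O + ΔΔ^⊤)(Σ_I + Σ_O + ΔΔ^⊤)⁻¹` minimizes the MSE of the matrix-weighted
estimator `α̂_W = W α̂_I + (I − W) α̂_O` over all weight matrices `W`. -/
theorem stmt_9 {Ω : Type*} [MeasurableSpace Ω] (μ : Measure Ω) [IsProbabilityMeasure μ]
    {p : ℕ} (α Δ : Fin p → ℝ) (SI SO : Matrix (Fin p) (Fin p) ℝ)
    (hSIpsd : SI.PosSemidef) (hSOpsd : SO.PosSemidef)
    (αI αO : Ω → Fin p → ℝ) (hmI : Measurable αI) (hmO : Measurable αO)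
    (hindep : IndepFun αI αO μ)
    (hL2I : ∀ i j, Integrable (fun ω => αI ω i * αI ω j) μ)
    (hL2O : ∀ i j, Integrable (fun ω => αO ω i * αO ω j) μ)
    (hL1I : ∀ i, Integrable (fun ω => αI ω i) μ)
    (hL1O : ∀ i, Integrable (fun ω => αO ω i) μ)
    (hmeanI : ∀ i, ∫ ω, αI ω i ∂μ = α i)
    (hmeanO : ∀ i, ∫ ω, αO ω i ∂μ = α i + Δ i)
    (hcovI : ∀ i j, ∫ ω, (αI ω i - α i) * (αI ω j - α j) ∂μ = SI i j)
    (hcovO : ∀ i j, ∫ ω, (αO ω i - (α i + Δ i)) * (αO ω j - (α j + Δ j)) ∂μ = SO i j)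
    (hpd : (SI + SO + vecMulVec Δ Δ).PosDef)
    (Wstar : Matrix (Fin p) (Fin p) ℝ)
    (hWstar : Wstar = (SO + vecMulVec Δ Δ) * (SI + SO + vecMulVec Δ Δ)⁻¹) :
    ∀ W : Matrix (Fin p) (Fin p) ℝ,
      (∫ ω, ∑ k, ((Wstar *ᵥ αI ω + ((1 : Matrix (Fin p) (Fin p) ℝ) - Wstar) *ᵥ αO ω) k
          - α k) ^ 2 ∂μ) ≤
        ∫ ω, ∑ k, ((W *ᵥ αI ω + ((1 : Matrix (Fin p) (Fin p) ℝ) - W) *ᵥ αO ω) k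
          - α k) ^ 2 ∂μ := by
  intro W
  -- notation
  set A : Matrix (Fin p) (Fin p) ℝ := SI + SO + vecMulVec Δ Δ with hAdef
  set B : Matrix (Fin p) (Fin p) ℝ := SO + vecMulVec Δ Δ with hBdef
  have hAB : A = SI + B := by rw [hAdef, hBdef]; abel
  -- centered variables
  set F : Fin p → Ω → ℝ := fun i ω => αI ω i - α i with hF
  set G : Fin p → Ω → ℝ := fun i ω => αO ω i - α i with hG
  -- integrability
  have hintF : ∀ i, Integrable (F i) μ := fun i => (hL1I i).sub (integrable_const _)
  have hintG : ∀ i, Integrable (G i) μ := fun i => (hL1O i).sub (integrable_const _)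
  have hintFF : ∀ i j, Integrable (fun ω => F i ω * F j ω) μ := by
    intro i j
    have heq : (fun ω => F i ω * F j ω)
        = fun ω => αI ω i * αI ω j - α j * αI ω i - α i * αI ω j + α i * α j := by
      funext ω; simp only [hF]; ring
    rw [heq]
    exact (((hL2I i j).sub ((hL1I i).const_mul _)).sub ((hL1I j).const_mul _)).add
      (integrable_const _)
  have hintGG : ∀ i j, Integrable (fun ω => G i ω * G j ω) μ := by
    intro i j
    have heq : (fun ω => G i ω * G j ω)
        = fun ω => αO ω i * αO ω j - α j * αO ω i - α i * αO ω j + α i * α j := by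
      funext ω; simp only [hG]; ring
    rw [heq]
    exact (((hL2O i j).sub ((hL1O i).const_mul _)).sub ((hL1O j).const_mul _)).add
      (integrable_const _)
  have hindep' : ∀ i j, IndepFun (F i) (G j) μ := fun i j =>
    hindep.comp ((measurable_pi_apply i).sub measurable_const)
      ((measurable_pi_apply j).sub measurable_const)
  have hintFG : ∀ i j, Integrable (fun ω => F i ω * G j ω) μ := fun i j =>
    (hindep' i j).integrable_mul (hintF i) (hintG j)
  -- first moments
  have hFval : ∀ i, ∫ ω, F i ω ∂μ = 0 := by
    intro i
    rw [hF]
    rw [integral_sub (hL1I i) (integrable_const _), hmeanI, integral_const, probReal_univ]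
    simp
  have hGval : ∀ i, ∫ ω, G i ω ∂μ = Δ i := by
    intro i
    rw [hG]
    rw [integral_sub (hL1O i) (integrable_const _), hmeanO, integral_const, probReal_univ]
    simp
  -- second moments
  have hFF : ∀ i j, ∫ ω, F i ω * F j ω ∂μ = SI i j := fun i j => hcovI i j
  have hFG : ∀ i j, ∫ ω, F i ω * G j ω ∂μ = 0 := by
    intro i j
    have h := (hindep' i j).integral_fun_mul_eq_mul_integral (hintF i).aestronglyMeasurable
      (hintG j).aestronglyMeasurable
    have : ∫ ω, F i ω * G j ω ∂μ = (∫ ω, F i ω ∂μ) * ∫ ω, G j ω ∂μ := h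
    rw [this, hFval, zero_mul]
  have hGG : ∀ i j, ∫ ω, G i ω * G j ω ∂μ = B i j := by
    intro i j
    have h := hcovO i j
    have heq : (fun ω => (αO ω i - (α i + Δ i)) * (αO ω j - (α j + Δ j)))
        = fun ω => G i ω * G j ω - Δ i * G j ω - Δ j * G i ω + Δ i * Δ j := by
      funext ω; simp only [hG]; ring
    rw [heq] at h
    rw [integral_add, integral_sub, integral_sub, integral_const_mul, integral_const_mul,
      hGval, hGval, integral_const, probReal_univ] at h
    · have hBij : B i j = SO i j + Δ i * Δ j := by
        rw [hBdef]; simp [Matrix.add_apply, vecMulVec_apply]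
      rw [hBij, ← h]
      simp
      ring
    · exact hintGG i j
    · exact (hintG j).const_mul _
    · exact (hintGG i j).sub ((hintG j).const_mul _)
    · exact (hintG i).const_mul _
    · exact ((hintGG i j).sub ((hintG j).const_mul _)).sub ((hintG i).const_mul _)
    · exact integrable_const _
  -- pointwise identity for the error
  have hpt : ∀ (V : Matrix (Fin p) (Fin p) ℝ) (ω : Ω),
      ∑ k, ((V *ᵥ αI ω + ((1 : Matrix (Fin p) (Fin p) ℝ) - V) *ᵥ αO ω) k - α k) ^ 2
        = ∑ k, (∑ i, (V k i * F i ω + (1 - V) k i * G i ω)) ^ 2 := by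
    intro V ω
    refine Finset.sum_congr rfl fun k _ => ?_
    congr 1
    have hαk : α k = ∑ i, (V k i * α i + (1 - V) k i * α i) := by
      have h1 : ((1 : Matrix (Fin p) (Fin p) ℝ) *ᵥ α) k = α k := by rw [one_mulVec]
      rw [← h1]
      simp only [mulVec, dotProduct]
      refine Finset.sum_congr rfl fun i _ => ?_
      have h2 : (1 : Matrix (Fin p) (Fin p) ℝ) k i = V k i + (1 - V) k i := by simp
      rw [h2]; ring
    simp only [Pi.add_apply, mulVec, dotProduct]
    rw [hαk, ← Finset.sum_add_distrib, ← Finset.sum_sub_distrib]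
    refine Finset.sum_congr rfl fun i _ => ?_
    simp only [hF, hG]; ring
  -- the MSE of any weight matrix
  have hmse : ∀ V : Matrix (Fin p) (Fin p) ℝ,
      ∫ ω, ∑ k, ((V *ᵥ αI ω + ((1 : Matrix (Fin p) (Fin p) ℝ) - V) *ᵥ αO ω) k - α k) ^ 2 ∂μ
        = (V * SI * Vᵀ + (1 - V) * B * (1 - V)ᵀ).trace := by
    intro V
    have h := mse_formula μ F G SI B hintFF hintGG hintFG hFF hGG hFG V (1 - V)
    rw [← h]
    exact integral_congr_ae (Filter.Eventually.of_forall fun ω => hpt V ω)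
  -- algebraic facts about Wstar
  have hSOt : SOᵀ = SO := by
    rw [← conjTranspose_eq_transpose_of_trivial]; exact hSOpsd.1
  have hSIt : SIᵀ = SI := by
    rw [← conjTranspose_eq_transpose_of_trivial]; exact hSIpsd.1
  have hvt : (vecMulVec Δ Δ)ᵀ = vecMulVec Δ Δ := by
    ext i j; simp [Matrix.transpose_apply, vecMulVec_apply, mul_comm]
  have hBt : Bᵀ = B := by rw [hBdef, transpose_add, hSOt, hvt]
  have hAt : Aᵀ = A := by rw [hAdef, transpose_add, transpose_add, hSIt, hSOt, hvt]
  have hdet : IsUnit A.det := hpd.det_pos.ne'.isUnit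
  have h1 : Wstar * A = B := by
    rw [hWstar]
    show B * A⁻¹ * A = B
    rw [mul_assoc, Matrix.nonsing_inv_mul A hdet, mul_one]
  have h2 : A * Wstarᵀ = B := by
    have := congrArg Matrix.transpose h1
    rw [Matrix.transpose_mul, hAt, hBt] at this
    exact this
  -- conclude
  rw [hmse Wstar, hmse W]
  rw [mse_alg SI B A W Wstar hAB h1 h2, mse_alg SI B A Wstar Wstar hAB h1 h2]
  have h0 : (Wstar - Wstar) * A * (Wstar - Wstar)ᵀ = (0 : Matrix (Fin p) (Fin p) ℝ) := by
    simp
  rw [h0, trace_add, trace_add]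
  have hnn : 0 ≤ ((W - Wstar) * A * (W - Wstar)ᵀ).trace :=
    trace_conj_nonneg hpd.posSemidef _
  simp only [trace_zero, zero_add]
  linarith
end
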